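/- arXiv:1506.02280 — 3 statements merged into one kernel-verified Lean document; each statement's English description precedes it below -/
import Mathlib

section
/- For every nonzero $x\in\mathbb{R}$ and every $s>0$, the Laplace transform in time of the spatial derivative of the heat kernel satisfies $\int_0^\infty e^{-st}\,\partial_x p(t,x)\,dt=-\,\mathrm{sgn}(x)\,e^{-|x|\sqrt{2s}}$, where $\partial_x p(t,x)=-\frac{x}{t}\,p(t,x)$. -/
/-!
Since `∂ₓ p(t,x) = -(x/t) p(t,x)`, the integrand is `-sgn(x)/√(2π)` times
`a t^{-3/2} exp(-a²/(2t) - b²t/2)` with `a = |x|`, `b = √(2s)` (up to `√(2π)`, the Lévy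
density of the first passage of Brownian motion to level `a`, damped by `e^{-b²t/2}`). Writing
`Φ(v) = ∫₀ᵛ e^{-r²/2} dr`, this has the explicit primitive
`e^{-ab} Φ(b√t - a/√t) + e^{ab} Φ(-(b√t + a/√t))`, because both squares
`(b√t ∓ a/√t)²/2` equal `a²/(2t) + b²t/2 ∓ ab`. Its limits `-(√(2π)/2)(e^{-ab} + e^{ab})` at
`0⁺` and `(√(2π)/2)(e^{-ab} - e^{ab})` at `∞` give the integral `√(2π) e^{-ab}`.
-/

open MeasureTheory

noncomputable section

/-- The Gaussian heat kernel `p(t,x) = (2πt)^{-1/2} exp(-x²/(2t))`. -/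
def heatKer (t x : ℝ) : ℝ :=
  (Real.sqrt (2 * Real.pi * t))⁻¹ * Real.exp (-x ^ 2 / (2 * t))

open Real Filter Set Topology

theorem integral_Ioi_of_hasDerivAt_of_nonneg_of_tendsto {g g' : ℝ → ℝ} {a l₀ l : ℝ}
    (hderiv : ∀ x ∈ Ioi a, HasDerivAt g (g' x) x) (hpos : ∀ x ∈ Ioi a, 0 ≤ g' x)
    (h₀ : Tendsto g (𝓝[>] a) (𝓝 l₀)) (hg : Tendsto g atTop (𝓝 l)) :
    ∫ x in Ioi a, g' x = l - l₀ := by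
  set G := Function.update g a l₀
  have hGa : G a = l₀ := Function.update_self ..
  have hGg : ∀ x ∈ Ioi a, G x = g x := fun x hx => Function.update_of_ne hx.ne' _ _
  have hcont : ContinuousWithinAt G (Ici a) a := by
    rw [← continuousWithinAt_Ioi_iff_Ici, ContinuousWithinAt, hGa]
    exact h₀.congr' (eventually_nhdsWithin_of_forall fun x hx => (hGg x hx).symm)
  have hderivG : ∀ x ∈ Ioi a, HasDerivAt G (g' x) x := fun x hx =>
    (hderiv x hx).congr_of_eventuallyEq
      (eventually_of_mem (Ioi_mem_nhds hx) hGg)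
  have hG : Tendsto G atTop (𝓝 l) :=
    hg.congr' (eventually_of_mem (Ioi_mem_atTop a) fun x hx => (hGg x hx).symm)
  rw [integral_Ioi_of_hasDerivAt_of_nonneg hcont hderivG hpos hG, hGa]

def gaussPrimitive (v : ℝ) : ℝ := ∫ r in (0 : ℝ)..v, exp (-r ^ 2 / 2)

theorem hasDerivAt_gaussPrimitive (v : ℝ) : HasDerivAt gaussPrimitive (exp (-v ^ 2 / 2)) v :=
  intervalIntegral.integral_hasDerivAt_right (Continuous.intervalIntegrable (by fun_prop) _ _)
    (Continuous.stronglyMeasurableAtFilter (by fun_prop) _ _) (by fun_prop)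

theorem gaussPrimitive_neg (v : ℝ) : gaussPrimitive (-v) = -gaussPrimitive v := by
  have h := intervalIntegral.integral_comp_neg (a := 0) (b := v) fun r => exp (-r ^ 2 / 2)
  simp only [neg_sq, neg_zero] at h
  rw [gaussPrimitive, gaussPrimitive, intervalIntegral.integral_symm, h]

theorem tendsto_gaussPrimitive_atTop :
    Tendsto gaussPrimitive atTop (𝓝 (√(2 * π) / 2)) := by
  have hexp : (fun r : ℝ => exp (-r ^ 2 / 2)) = fun r => exp (-(1 / 2) * r ^ 2) := by
    ext r; ring_nf
  have hint : ∫ r in Ioi (0 : ℝ), exp (-r ^ 2 / 2) = √(2 * π) / 2 := by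
    rw [hexp, integral_gaussian_Ioi]; ring_nf
  rw [← hint]
  refine intervalIntegral_tendsto_integral_Ioi 0 ?_ tendsto_id
  rw [hexp]; exact (integrable_exp_neg_mul_sq (by norm_num)).integrableOn

theorem tendsto_gaussPrimitive_atBot :
    Tendsto gaussPrimitive atBot (𝓝 (-(√(2 * π) / 2))) := by
  have := (tendsto_gaussPrimitive_atTop.comp tendsto_neg_atBot_atTop).neg
  refine this.congr fun v => ?_
  simp [gaussPrimitive_neg]

def levyPrimitive (a b t : ℝ) : ℝ :=
  exp (-(a * b)) * gaussPrimitive (b * √t - a * (√t)⁻¹) +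
    exp (a * b) * gaussPrimitive (-(b * √t + a * (√t)⁻¹))

theorem hasDerivAt_levyPrimitive (a b : ℝ) {t : ℝ} (ht : 0 < t) :
    HasDerivAt (levyPrimitive a b)
      (a / (t * √t) * exp (-(a ^ 2 / (2 * t) + b ^ 2 * t / 2))) t := by
  obtain ⟨σ, hσ, rfl⟩ : ∃ σ, 0 < σ ∧ t = σ ^ 2 := ⟨√t, sqrt_pos.2 ht, (sq_sqrt ht.le).symm⟩
  have hsqrt : HasDerivAt (√·) (1 / (2 * √(σ ^ 2))) (σ ^ 2) := hasDerivAt_sqrt ht.ne'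
  have hinv := hsqrt.inv (sqrt_pos.2 ht).ne'
  have hu := (hasDerivAt_gaussPrimitive _).comp _ ((hsqrt.const_mul b).sub (hinv.const_mul a))
  have hw :=
    (hasDerivAt_gaussPrimitive _).comp _ ((hsqrt.const_mul b).add (hinv.const_mul a)).neg
  refine ((hu.const_mul _).add (hw.const_mul _)).congr_deriv ?_
  simp only [Pi.sub_apply, Pi.add_apply, Pi.neg_apply, Pi.inv_apply, sqrt_sq hσ.le]
  rw [← mul_assoc, ← mul_assoc, ← exp_add, ← exp_add]
  have hexp_u :
      -(a * b) + -(b * σ - a * σ⁻¹) ^ 2 / 2 = -(a ^ 2 / (2 * σ ^ 2) + b ^ 2 * σ ^ 2 / 2) := by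
    field_simp; ring
  have hexp_w :
      a * b + -(-(b * σ + a * σ⁻¹)) ^ 2 / 2 = -(a ^ 2 / (2 * σ ^ 2) + b ^ 2 * σ ^ 2 / 2) := by
    field_simp; ring
  rw [hexp_u, hexp_w]
  field_simp
  ring

theorem tendsto_levyPrimitive_nhdsGT_zero {a : ℝ} (ha : 0 < a) (b : ℝ) :
    Tendsto (levyPrimitive a b) (𝓝[>] 0)
      (𝓝 (-(√(2 * π) / 2) * (exp (-(a * b)) + exp (a * b)))) := by
  have hσ : Tendsto (√·) (𝓝[>] 0) (𝓝[>] 0) := by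
    refine tendsto_nhdsWithin_of_tendsto_nhds_of_eventually_within _ ?_
      (eventually_nhdsWithin_of_forall fun t ht => sqrt_pos.2 ht)
    exact (continuous_sqrt.tendsto' 0 0 sqrt_zero).mono_left nhdsWithin_le_nhds
  have hinv : Tendsto (fun t => a * (√t)⁻¹) (𝓝[>] 0) atTop :=
    hσ.inv_tendsto_nhdsGT_zero.const_mul_atTop ha
  have hlin : Tendsto (fun t => b * √t) (𝓝[>] 0) (𝓝 0) := by
    simpa using (hσ.mono_right nhdsWithin_le_nhds).const_mul b
  have hu :=
    tendsto_gaussPrimitive_atBot.comp (hlin.add_atBot (tendsto_neg_atTop_atBot.comp hinv))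
  have hw :=
    tendsto_gaussPrimitive_atBot.comp (tendsto_neg_atTop_atBot.comp (hlin.add_atTop hinv))
  convert (hu.const_mul (exp (-(a * b)))).add (hw.const_mul (exp (a * b))) using 2
  · simp [levyPrimitive, sub_eq_add_neg]
  · ring

theorem tendsto_levyPrimitive_atTop (a : ℝ) {b : ℝ} (hb : 0 < b) :
    Tendsto (levyPrimitive a b) atTop (𝓝 (√(2 * π) / 2 * (exp (-(a * b)) - exp (a * b)))) := by
  have hinv : Tendsto (fun t => a * (√t)⁻¹) atTop (𝓝 0) := by
    simpa using (tendsto_sqrt_atTop.inv_tendsto_atTop).const_mul a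
  have hlin : Tendsto (fun t => b * √t) atTop atTop := tendsto_sqrt_atTop.const_mul_atTop hb
  have hu := tendsto_gaussPrimitive_atTop.comp (hlin.atTop_add hinv.neg)
  have hw :=
    tendsto_gaussPrimitive_atBot.comp (tendsto_neg_atTop_atBot.comp (hlin.atTop_add hinv))
  convert (hu.const_mul (exp (-(a * b)))).add (hw.const_mul (exp (a * b))) using 2
  · simp [levyPrimitive, sub_eq_add_neg]
  · ring

theorem integral_Ioi_div_mul_sqrt_mul_exp {a b : ℝ} (ha : 0 < a) (hb : 0 < b) :
    ∫ t in Ioi (0 : ℝ), a / (t * √t) * exp (-(a ^ 2 / (2 * t) + b ^ 2 * t / 2)) =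
      √(2 * π) * exp (-(a * b)) := by
  rw [integral_Ioi_of_hasDerivAt_of_nonneg_of_tendsto
    (fun t ht => hasDerivAt_levyPrimitive a b ht) (fun t ht => ?_)
    (tendsto_levyPrimitive_nhdsGT_zero ha b) (tendsto_levyPrimitive_atTop a hb)]
  · ring
  · have : (0 : ℝ) < t := ht
    positivity

theorem hasDerivAt_heatKer {t : ℝ} (ht : t ≠ 0) (x : ℝ) :
    HasDerivAt (heatKer t) (-(x / t) * heatKer t x) x := by
  have hexp := (((hasDerivAt_pow 2 x).neg.div_const (2 * t)).exp).const_mul (√(2 * π * t))⁻¹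
  refine hexp.congr_deriv ?_
  simp only [Pi.neg_apply, heatKer]
  field_simp
  norm_num

theorem Real.sign_mul_abs (x : ℝ) : Real.sign x * |x| = x := by
  rcases lt_trichotomy x 0 with hx | rfl | hx
  · rw [Real.sign_of_neg hx, abs_of_neg hx]; ring
  · simp
  · rw [Real.sign_of_pos hx, abs_of_pos hx, one_mul]

theorem exp_mul_deriv_heatKer_eq {s t : ℝ} (hs : 0 ≤ s) (ht : 0 < t) (x : ℝ) :
    exp (-s * t) * (-(x / t) * heatKer t x) = -Real.sign x / √(2 * π) *
      (|x| / (t * √t) * exp (-(|x| ^ 2 / (2 * t) + √(2 * s) ^ 2 * t / 2))) := by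
  have hsplit : -(x ^ 2 / (2 * t) + 2 * s * t / 2) = -s * t + -x ^ 2 / (2 * t) := by ring
  rw [heatKer, sqrt_mul (by positivity), sq_sqrt (by positivity), sq_abs, hsplit, exp_add]
  nth_rewrite 1 [← Real.sign_mul_abs x]
  field_simp

/-- Laplace transform (in time) of the spatial derivative of the heat kernel,
where `∂ₓ p(t,x) = -(x/t) p(t,x)`. -/
theorem laplace_transform_heat_kernel_deriv (x : ℝ) (hx : x ≠ 0) (s : ℝ) (hs : 0 < s) :
    (∀ t : ℝ, 0 < t → deriv (fun y => heatKer t y) x = -(x / t) * heatKer t x) ∧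
    ∫ t in Set.Ioi (0:ℝ), Real.exp (-s * t) * deriv (fun y => heatKer t y) x =
      -Real.sign x * Real.exp (-|x| * Real.sqrt (2 * s)) := by
  have hderiv : ∀ t : ℝ, 0 < t → deriv (fun y => heatKer t y) x = -(x / t) * heatKer t x :=
    fun t ht => (hasDerivAt_heatKer ht.ne' x).deriv
  refine ⟨hderiv, ?_⟩
  rw [setIntegral_congr_fun measurableSet_Ioi fun t (ht : 0 < t) => by
      rw [hderiv t ht, exp_mul_deriv_heatKer_eq hs.le ht],
    integral_const_mul,
    integral_Ioi_div_mul_sqrt_mul_exp (abs_pos.2 hx) (sqrt_pos.2 (by positivity))]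
  field_simp
end
end

section
/- For every $T>0$ and all $x,y\in\mathbb{R}$, the time-convolution of heat kernels satisfies $\int_0^T p(s,x)\,p(T-s,y)\,ds\le \frac{1}{2}$. -/
open MeasureTheory

noncomputable section

/-!
Since `p(s, x) ≤ p(s, 0) = (2πs)^{-1/2}`, the integrand is at most `(2π)⁻¹ (s (T - s))^{-1/2}`,
and `∫₀ᵀ (s (T - s))^{-1/2} ds = π` (an arcsine integral), whence the bound `π / (2π) = 1/2`.
-/

open Real Set

lemma heatKer_nonneg (t x : ℝ) : 0 ≤ heatKer t x := by
  unfold heatKer; positivity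

lemma heatKer_le_heatKer_zero (t x : ℝ) : heatKer t x ≤ heatKer t 0 := by
  rcases le_or_gt t 0 with ht | ht
  · have hroot : √(2 * π * t) = 0 :=
      sqrt_eq_zero'.2 (mul_nonpos_of_nonneg_of_nonpos (by positivity) ht)
    simp [heatKer, hroot]
  · have hexp : exp (-x ^ 2 / (2 * t)) ≤ 1 :=
      exp_le_one_iff.2 (div_nonpos_of_nonpos_of_nonneg (by nlinarith) (by positivity))
    simpa [heatKer] using mul_le_mul_of_nonneg_left hexp (by positivity : 0 ≤ (√(2 * π * t))⁻¹)

lemma heatKer_zero_mul_heatKer_zero {s : ℝ} (hs : 0 ≤ s) (T : ℝ) :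
    heatKer s 0 * heatKer (T - s) 0 = (2 * π)⁻¹ * (√(s * (T - s)))⁻¹ := by
  have hprod : 2 * π * s * (2 * π * (T - s)) = (2 * π) ^ 2 * (s * (T - s)) := by ring
  simp only [heatKer, ne_eq, OfNat.ofNat_ne_zero, not_false_eq_true, zero_pow, neg_zero,
    zero_div, exp_zero, mul_one]
  rw [← mul_inv, ← sqrt_mul (by positivity), hprod, sqrt_mul (by positivity),
    sqrt_sq (by positivity), mul_inv]

lemma hasDerivAt_arcsin_two_mul_sub_div {T s : ℝ} (hs : s ∈ Ioo 0 T) :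
    HasDerivAt (fun s => arcsin ((2 * s - T) / T)) (√(s * (T - s)))⁻¹ s := by
  obtain ⟨hs0, hsT⟩ := hs
  have hT : 0 < T := hs0.trans hsT
  have hlin : HasDerivAt (fun s : ℝ => (2 * s - T) / T) (2 / T) s := by
    simpa using (((hasDerivAt_id s).const_mul 2).sub_const T).div_const T
  have harcsin := (hasDerivAt_arcsin (x := (2 * s - T) / T)
    (by rw [Ne, div_eq_iff hT.ne']; intro h; linarith)
    (by rw [Ne, div_eq_iff hT.ne']; intro h; linarith)).comp s hlin
  refine harcsin.congr_deriv ?_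
  have hsq : 1 - ((2 * s - T) / T) ^ 2 = (2 * √(s * (T - s)) / T) ^ 2 := by
    rw [div_pow, div_pow, mul_pow, sq_sqrt (by nlinarith)]
    field_simp
    ring
  have hroot : 0 < √(s * (T - s)) := sqrt_pos.2 (by nlinarith)
  rw [hsq, sqrt_sq (by positivity)]
  field_simp

lemma intervalIntegrable_inv_sqrt_mul_sub {T : ℝ} (hT : 0 < T) :
    IntervalIntegrable (fun s => (√(s * (T - s)))⁻¹) volume 0 T :=
  (intervalIntegrable_iff_integrableOn_Ioc_of_le hT.le).2 <|
    intervalIntegral.integrableOn_deriv_of_nonneg (by fun_prop)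
      (fun _ hs => hasDerivAt_arcsin_two_mul_sub_div hs) (fun _ _ => by positivity)

lemma integral_inv_sqrt_mul_sub {T : ℝ} (hT : 0 < T) :
    ∫ s in (0:ℝ)..T, (√(s * (T - s)))⁻¹ = π := by
  rw [intervalIntegral.integral_eq_sub_of_hasDerivAt_of_le hT.le (by fun_prop)
    (fun _ hs => hasDerivAt_arcsin_two_mul_sub_div hs) (intervalIntegrable_inv_sqrt_mul_sub hT)]
  have h1 : (2 * T - T) / T = 1 := by field_simp; ring
  have h2 : (2 * 0 - T) / T = -1 := by field_simp; ring
  simp only [h1, h2, arcsin_one, arcsin_neg_one]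
  ring

/-- Bound on the time-convolution of two heat kernels. -/
theorem heat_kernel_time_convolution_bound (T : ℝ) (hT : 0 < T) (x y : ℝ) :
    ∫ s in (0:ℝ)..T, heatKer s x * heatKer (T - s) y ≤ 1 / 2 := by
  have hmajor : ∀ s ∈ Ioc 0 T,
      heatKer s x * heatKer (T - s) y ≤ (2 * π)⁻¹ * (√(s * (T - s)))⁻¹ := fun s hs => by
    rw [← heatKer_zero_mul_heatKer_zero hs.1.le]
    exact mul_le_mul (heatKer_le_heatKer_zero _ _) (heatKer_le_heatKer_zero _ _)
      (heatKer_nonneg _ _) (heatKer_nonneg _ _)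
  calc ∫ s in (0:ℝ)..T, heatKer s x * heatKer (T - s) y
      ≤ ∫ s in (0:ℝ)..T, (2 * π)⁻¹ * (√(s * (T - s)))⁻¹ := by
        simp only [intervalIntegral.integral_of_le hT.le]
        exact integral_mono_of_nonneg
          (.of_forall fun s => mul_nonneg (heatKer_nonneg _ _) (heatKer_nonneg _ _))
          ((intervalIntegrable_inv_sqrt_mul_sub hT).1.const_mul _)
          ((ae_restrict_iff' measurableSet_Ioc).2 (.of_forall hmajor))
    _ = (2 * π)⁻¹ * π := by
        rw [intervalIntegral.integral_const_mul, integral_inv_sqrt_mul_sub hT]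
    _ = 1 / 2 := by field_simp
end
end

section
/- For every $\beta\in[0,1/2]$ and every $\gamma\ge 0$ there exists a constant $c_{\beta,\gamma}>0$ such that for all real $a<b$ and every $z\in\mathbb{R}$, $\int_a^b\!\!\int_s^b (t-s)^{\gamma}\,\big[p(t-s,0)-p(t-s,z)\big]\,\big[p(s-a,0)+p(s-a,z)\big]\,dt\,ds\;\le\; c_{\beta,\gamma}\,|b-a|^{\gamma+1-\beta}\,|z|^{2\beta}$. -/
open MeasureTheory intervalIntegral

noncomputable section

/-- `1 - exp(-x) ≤ x^θ` for `x ≥ 0`, `θ ∈ [0,1]`. -/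
lemma one_sub_exp_le_rpow {x θ : ℝ} (hx : 0 ≤ x) (hθ0 : 0 ≤ θ) (hθ1 : θ ≤ 1) :
    1 - Real.exp (-x) ≤ x ^ θ := by
  rcases eq_or_lt_of_le hx with h | hx0
  · simp only [← h, neg_zero, Real.exp_zero, sub_self]
    exact Real.rpow_nonneg le_rfl θ
  rcases le_or_gt x 1 with h1 | h1
  · have h2 : 1 - Real.exp (-x) ≤ x := by
      have := Real.add_one_le_exp (-x); linarith
    calc 1 - Real.exp (-x) ≤ x := h2
      _ = x ^ (1:ℝ) := (Real.rpow_one x).symm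
      _ ≤ x ^ θ := Real.rpow_le_rpow_of_exponent_ge hx0 h1 hθ1
  · have : (1:ℝ) - Real.exp (-x) ≤ 1 := by
      have := Real.exp_pos (-x); linarith
    calc 1 - Real.exp (-x) ≤ 1 := this
      _ = x ^ (0:ℝ) := (Real.rpow_zero x).symm
      _ ≤ x ^ θ := Real.rpow_le_rpow_of_exponent_le (le_of_lt h1) hθ0

/-- Power integral bound on `[v,T]`. -/
lemma integral_rpow_le {v T q : ℝ} (hv : 0 < v) (hvT : v ≤ T) (hq : q + 1 ≠ 0) :
    ∫ u in v..T, u ^ q ≤ (T ^ (q + 1) + v ^ (q + 1)) / |q + 1| := by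
  have h0 : (0:ℝ) ∉ Set.uIcc v T := by
    rw [Set.uIcc_of_le hvT]
    intro h; exact absurd (Set.mem_Icc.1 h).1 (not_le.2 hv)
  rcases eq_or_ne q (-1) with rfl | hq1
  · simp at hq
  rw [integral_rpow (Or.inr ⟨hq1, h0⟩)]
  have hT : 0 < T := lt_of_lt_of_le hv hvT
  have hTp : 0 ≤ T ^ (q+1) := Real.rpow_nonneg hT.le _
  have hvp : 0 ≤ v ^ (q+1) := Real.rpow_nonneg hv.le _
  rcases lt_or_gt_of_ne hq with h | h
  · rw [abs_of_neg h]
    have e : (T ^ (q+1) - v ^ (q+1)) / (q + 1)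
        = (v ^ (q+1) - T ^ (q+1)) / (-(q + 1)) := by
      rw [div_neg, ← neg_div]; ring_nf
    rw [e]
    have hd : (0:ℝ) < -(q+1) := by linarith
    gcongr
    linarith
  · rw [abs_of_pos h]
    gcongr
    linarith

/-- The dominating 1-D integrand. -/
def phi (γ z u : ℝ) : ℝ := u ^ (γ - 1/2) * (1 - Real.exp (-z ^ 2 / (2 * u)))

lemma measurable_phi (γ z : ℝ) : Measurable (phi γ z) := by
  unfold phi
  fun_prop

lemma phi_nonneg (γ z : ℝ) {u : ℝ} (hu : 0 ≤ u) : 0 ≤ phi γ z u := by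
  unfold phi
  apply mul_nonneg (Real.rpow_nonneg hu _)
  have : Real.exp (-z ^ 2 / (2 * u)) ≤ 1 := by
    rw [Real.exp_le_one_iff]
    exact div_nonpos_of_nonpos_of_nonneg (neg_nonpos.2 (sq_nonneg z)) (by positivity)
  linarith

lemma phi_le (γ z : ℝ) {u : ℝ} (hu : 0 ≤ u) : phi γ z u ≤ u ^ (γ - 1/2) := by
  unfold phi
  have h1 : 1 - Real.exp (-z ^ 2 / (2 * u)) ≤ 1 := by
    have := Real.exp_pos (-z ^ 2 / (2 * u)); linarith
  calc u ^ (γ - 1/2) * (1 - Real.exp (-z ^ 2 / (2 * u)))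
      ≤ u ^ (γ - 1/2) * 1 := by
        apply mul_le_mul_of_nonneg_left h1 (Real.rpow_nonneg hu _)
    _ = u ^ (γ - 1/2) := mul_one _

lemma phi_intervalIntegrable {γ : ℝ} (hγ : 0 ≤ γ) (z T : ℝ) (hT : 0 ≤ T) :
    IntervalIntegrable (phi γ z) volume 0 T := by
  have hr : IntervalIntegrable (fun u : ℝ => u ^ (γ - 1/2)) volume 0 T :=
    intervalIntegral.intervalIntegrable_rpow' (by linarith)
  apply hr.mono_fun ((measurable_phi γ z).aestronglyMeasurable)
  filter_upwards [ae_restrict_mem measurableSet_uIoc] with u hu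
  rw [Set.uIoc_of_le hT] at hu
  have hu0 : 0 ≤ u := le_of_lt hu.1
  rw [Real.norm_eq_abs, Real.norm_eq_abs, abs_of_nonneg (phi_nonneg γ z hu0),
    abs_of_nonneg (Real.rpow_nonneg hu0 _)]
  exact phi_le γ z hu0

lemma lemA {β γ : ℝ} (hβ0 : 0 ≤ β) (hβ : β ≤ 1/2) (hγ : 0 ≤ γ) :
    ∃ C : ℝ, 0 < C ∧ ∀ T z : ℝ, 0 ≤ T →
      (∫ u in (0:ℝ)..T, phi γ z u) ≤ C * T ^ (γ + 1/2 - β) * |z| ^ (2 * β) := by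
  set θ : ℝ := if γ = 1/2 then 3/4 else 1 with hθdef
  have hθβ : β ≤ θ := by unfold θ ; split_ifs <;> linarith
  have hθ0 : 0 ≤ θ := by linarith
  have hθ1 : θ ≤ 1 := by unfold θ ; split_ifs <;> linarith
  have hne : γ + 1/2 - θ ≠ 0 := by
    unfold θ ; split_ifs with h
    · rw [h]; norm_num
    · intro hc; apply h; linarith
  set K1 : ℝ := (γ + 1/2)⁻¹ with hK1def
  have hK1 : 0 < K1 := by positivity
  set K2 : ℝ := 2 / |γ + 1/2 - θ| with hK2def
  have hK2 : 0 < K2 := by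
    apply div_pos (by norm_num) (abs_pos.2 hne)
  refine ⟨K1 + K2, by linarith, ?_⟩
  intro T z hT
  have he : 0 ≤ γ + 1/2 - β := by linarith
  have hrhs0 : 0 ≤ (K1 + K2) * T ^ (γ + 1/2 - β) * |z| ^ (2 * β) := by
    apply mul_nonneg (mul_nonneg (by linarith) (Real.rpow_nonneg hT _))
      (Real.rpow_nonneg (abs_nonneg z) _)
  rcases eq_or_lt_of_le hT with hT0 | hT0
  · rw [← hT0] at hrhs0 ⊢
    rw [intervalIntegral.integral_same]; exact hrhs0
  rcases eq_or_ne z 0 with rfl | hz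
  · have : ∀ u : ℝ, phi γ 0 u = 0 := by intro u; simp [phi]
    simp only [this, intervalIntegral.integral_zero]
    exact hrhs0
  set v : ℝ := z ^ 2 / 2 with hvdef
  have hv : 0 < v := by positivity
  have hzv : v ^ β ≤ |z| ^ (2 * β) := by
    have h1 : |z| ^ (2 * β) = (z ^ 2) ^ β := by
      rw [Real.rpow_mul (abs_nonneg z)]
      congr 1
      rw [show (2:ℝ) = ((2:ℕ):ℝ) by norm_num, Real.rpow_natCast, sq_abs]
    rw [h1]
    exact Real.rpow_le_rpow (by positivity) (by linarith [sq_nonneg z]) hβ0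
  have base : ∀ X : ℝ, 0 ≤ X → (∫ u in (0:ℝ)..X, phi γ z u) ≤ K1 * X ^ (γ + 1/2) := by
    intro X hX
    have h1 : (∫ u in (0:ℝ)..X, phi γ z u) ≤ ∫ u in (0:ℝ)..X, u ^ (γ - 1/2) :=
      intervalIntegral.integral_mono_on hX (phi_intervalIntegrable hγ z X hX)
        (intervalIntegral.intervalIntegrable_rpow' (by linarith))
        (fun u hu => phi_le γ z hu.1)
    rw [integral_rpow (Or.inl (by linarith)),
      Real.zero_rpow (by linarith : γ - 1/2 + 1 ≠ 0), sub_zero,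
      show γ - 1/2 + 1 = γ + 1/2 by ring] at h1
    calc (∫ u in (0:ℝ)..X, phi γ z u) ≤ X ^ (γ + 1/2) / (γ + 1/2) := h1
      _ = K1 * X ^ (γ + 1/2) := by rw [hK1def, div_eq_inv_mul]
  suffices hkey : (∫ u in (0:ℝ)..T, phi γ z u) ≤ (K1 + K2) * T ^ (γ + 1/2 - β) * v ^ β by
    calc (∫ u in (0:ℝ)..T, phi γ z u) ≤ (K1 + K2) * T ^ (γ + 1/2 - β) * v ^ β := hkey
      _ ≤ (K1 + K2) * T ^ (γ + 1/2 - β) * |z| ^ (2 * β) := by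
          apply mul_le_mul_of_nonneg_left hzv
          exact mul_nonneg (by linarith) (Real.rpow_nonneg hT _)
  have hTe : (0:ℝ) ≤ T ^ (γ + 1/2 - β) := Real.rpow_nonneg hT _
  have hvβ : (0:ℝ) ≤ v ^ β := Real.rpow_nonneg hv.le _
  rcases le_or_gt T v with hTv | hvT
  · -- small T
    calc (∫ u in (0:ℝ)..T, phi γ z u) ≤ K1 * T ^ (γ + 1/2) := base T hT
      _ = K1 * (T ^ (γ + 1/2 - β) * T ^ β) := by
          rw [← Real.rpow_add hT0]; ring_nf
      _ ≤ K1 * (T ^ (γ + 1/2 - β) * v ^ β) := by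
          apply mul_le_mul_of_nonneg_left _ hK1.le
          exact mul_le_mul_of_nonneg_left (Real.rpow_le_rpow hT hTv hβ0) hTe
      _ ≤ (K1 + K2) * T ^ (γ + 1/2 - β) * v ^ β := by
          nlinarith [mul_nonneg (mul_nonneg hK2.le hTe) hvβ]
  · -- split at v
    have hint1 : IntervalIntegrable (phi γ z) volume 0 v := phi_intervalIntegrable hγ z v hv.le
    have hint2 : IntervalIntegrable (phi γ z) volume v T := by
      apply (phi_intervalIntegrable hγ z T hT).mono_set'
      rw [Set.uIoc_of_le hvT.le, Set.uIoc_of_le hT]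
      exact Set.Ioc_subset_Ioc hv.le le_rfl
    rw [← intervalIntegral.integral_add_adjacent_intervals hint1 hint2]
    have mono2 : ∀ p : ℝ, β ≤ p → v ^ p * T ^ (γ + 1/2 - p) ≤ v ^ β * T ^ (γ + 1/2 - β) := by
      intro p hp
      have h1 : v ^ p = v ^ β * v ^ (p - β) := by
        rw [← Real.rpow_add hv]; ring_nf
      have h2 : v ^ (p - β) ≤ T ^ (p - β) :=
        Real.rpow_le_rpow hv.le hvT.le (by linarith)
      calc v ^ p * T ^ (γ + 1/2 - p) = v ^ β * (v ^ (p - β) * T ^ (γ + 1/2 - p)) := by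
            rw [h1]; ring
        _ ≤ v ^ β * (T ^ (p - β) * T ^ (γ + 1/2 - p)) := by
            apply mul_le_mul_of_nonneg_left _ hvβ
            exact mul_le_mul_of_nonneg_right h2 (Real.rpow_nonneg hT _)
        _ = v ^ β * T ^ (γ + 1/2 - β) := by
            rw [← Real.rpow_add hT0]; ring_nf
    have piece1 : (∫ u in (0:ℝ)..v, phi γ z u) ≤ K1 * (T ^ (γ + 1/2 - β) * v ^ β) := by
      calc (∫ u in (0:ℝ)..v, phi γ z u) ≤ K1 * v ^ (γ + 1/2) := base v hv.le
        _ = K1 * (v ^ (γ + 1/2) * T ^ (0:ℝ)) := by rw [Real.rpow_zero, mul_one]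
        _ ≤ K1 * (v ^ β * T ^ (γ + 1/2 - β)) := by
            apply mul_le_mul_of_nonneg_left _ hK1.le
            have := mono2 (γ + 1/2) (by linarith)
            simpa using this
        _ = K1 * (T ^ (γ + 1/2 - β) * v ^ β) := by ring
    have piece2 : (∫ u in v..T, phi γ z u) ≤ K2 * (T ^ (γ + 1/2 - β) * v ^ β) := by
      have hq : γ - 1/2 - θ + 1 ≠ 0 := by intro hc; apply hne; linarith
      have h0uIcc : (0:ℝ) ∉ Set.uIcc v T := by
        rw [Set.uIcc_of_le hvT.le]
        intro hc; exact absurd (Set.mem_Icc.1 hc).1 (not_le.2 hv)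
      have hintg : IntervalIntegrable (fun u : ℝ => v ^ θ * u ^ (γ - 1/2 - θ)) volume v T :=
        (intervalIntegral.intervalIntegrable_rpow (Or.inr h0uIcc)).const_mul _
      have hptw : ∀ u ∈ Set.Icc v T, phi γ z u ≤ v ^ θ * u ^ (γ - 1/2 - θ) := by
        intro u hu
        have hu0 : 0 < u := lt_of_lt_of_le hv hu.1
        have harg : -z ^ 2 / (2 * u) = -(v / u) := by
          rw [hvdef]; field_simp
        have h1 : 1 - Real.exp (-z ^ 2 / (2 * u)) ≤ (v / u) ^ θ := by
          rw [harg]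
          exact one_sub_exp_le_rpow (by positivity) hθ0 hθ1
        calc phi γ z u ≤ u ^ (γ - 1/2) * (v / u) ^ θ :=
              mul_le_mul_of_nonneg_left h1 (Real.rpow_nonneg hu0.le _)
          _ = v ^ θ * u ^ (γ - 1/2 - θ) := by
              rw [Real.div_rpow hv.le hu0.le, Real.rpow_sub hu0 (γ - 1/2) θ]
              ring
      calc (∫ u in v..T, phi γ z u) ≤ ∫ u in v..T, v ^ θ * u ^ (γ - 1/2 - θ) :=
            intervalIntegral.integral_mono_on hvT.le hint2 hintg hptw
        _ = v ^ θ * ∫ u in v..T, u ^ (γ - 1/2 - θ) := intervalIntegral.integral_const_mul _ _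
        _ ≤ v ^ θ * ((T ^ (γ - 1/2 - θ + 1) + v ^ (γ - 1/2 - θ + 1)) / |γ - 1/2 - θ + 1|) := by
            apply mul_le_mul_of_nonneg_left (integral_rpow_le hv hvT.le hq)
              (Real.rpow_nonneg hv.le _)
        _ = (v ^ θ * T ^ (γ + 1/2 - θ) + v ^ θ * v ^ (γ + 1/2 - θ)) / |γ + 1/2 - θ| := by
            rw [show γ - 1/2 - θ + 1 = γ + 1/2 - θ by ring]; ring
        _ ≤ (v ^ β * T ^ (γ + 1/2 - β) + v ^ β * T ^ (γ + 1/2 - β)) / |γ + 1/2 - θ| := by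
            have h1 := mono2 θ hθβ
            have h2 : v ^ θ * v ^ (γ + 1/2 - θ) ≤ v ^ β * T ^ (γ + 1/2 - β) := by
              have h3 : v ^ θ * v ^ (γ + 1/2 - θ) = v ^ (γ + 1/2) * T ^ (γ + 1/2 - (γ + 1/2)) := by
                rw [← Real.rpow_add hv]; simp
              rw [h3]
              exact mono2 (γ + 1/2) (by linarith)
            have hd : (0:ℝ) < |γ + 1/2 - θ| := abs_pos.2 hne
            gcongr
        _ = K2 * (T ^ (γ + 1/2 - β) * v ^ β) := by
            rw [hK2def]; field_simp; ring
    calc (∫ u in (0:ℝ)..v, phi γ z u) + (∫ u in v..T, phi γ z u)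
        ≤ K1 * (T ^ (γ + 1/2 - β) * v ^ β) + K2 * (T ^ (γ + 1/2 - β) * v ^ β) :=
          add_le_add piece1 piece2
      _ = (K1 + K2) * T ^ (γ + 1/2 - β) * v ^ β := by ring

lemma phi_zero (γ z : ℝ) : phi γ z 0 = 0 := by simp [phi]

lemma sqrt_two_pi_inv_le {u : ℝ} (hu : 0 < u) :
    (Real.sqrt (2 * Real.pi * u))⁻¹ ≤ u ^ (-(1/2) : ℝ) := by
  have h1 : Real.sqrt u ≤ Real.sqrt (2 * Real.pi * u) := by
    apply Real.sqrt_le_sqrt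
    nlinarith [Real.pi_gt_three]
  have h2 : 0 < Real.sqrt u := Real.sqrt_pos.2 hu
  have h3 : (Real.sqrt (2 * Real.pi * u))⁻¹ ≤ (Real.sqrt u)⁻¹ := by gcongr
  calc (Real.sqrt (2 * Real.pi * u))⁻¹ ≤ (Real.sqrt u)⁻¹ := h3
    _ = u ^ (-(1/2) : ℝ) := by rw [Real.rpow_neg hu.le, ← Real.sqrt_eq_rpow]

lemma heatKer_sub_eq {u : ℝ} (z : ℝ) :
    heatKer u 0 - heatKer u z
      = (Real.sqrt (2 * Real.pi * u))⁻¹ * (1 - Real.exp (-z ^ 2 / (2 * u))) := by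
  simp [heatKer]; ring

lemma exp_term_le_one {u z : ℝ} (hu : 0 < u) : Real.exp (-z ^ 2 / (2 * u)) ≤ 1 := by
  rw [Real.exp_le_one_iff]
  exact div_nonpos_of_nonpos_of_nonneg (neg_nonpos.2 (sq_nonneg z)) (by positivity)

lemma inner_ptwise {γ : ℝ} (hγ : 0 ≤ γ) (z : ℝ) {a s t : ℝ} (has : a < s) (hst : s < t) :
    (t - s) ^ γ * (heatKer (t - s) 0 - heatKer (t - s) z) *
      (heatKer (s - a) 0 + heatKer (s - a) z)
    ≤ 2 * (s - a) ^ (-(1/2) : ℝ) * phi γ z (t - s) := by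
  set u : ℝ := t - s with hudef
  set w : ℝ := s - a with hwdef
  have hu : 0 < u := by simp [hudef]; linarith
  have hw : 0 < w := by simp [hwdef]; linarith
  have hE : Real.exp (-z ^ 2 / (2 * u)) ≤ 1 := exp_term_le_one hu
  have hE' : Real.exp (-z ^ 2 / (2 * w)) ≤ 1 := exp_term_le_one hw
  have hE0 : 0 < Real.exp (-z ^ 2 / (2 * u)) := Real.exp_pos _
  have hE0' : 0 < Real.exp (-z ^ 2 / (2 * w)) := Real.exp_pos _
  have hA : (Real.sqrt (2 * Real.pi * u))⁻¹ ≤ u ^ (-(1/2) : ℝ) := sqrt_two_pi_inv_le hu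
  have hA' : (Real.sqrt (2 * Real.pi * w))⁻¹ ≤ w ^ (-(1/2) : ℝ) := sqrt_two_pi_inv_le hw
  have hAnn : 0 ≤ (Real.sqrt (2 * Real.pi * u))⁻¹ := by positivity
  have hAnn' : 0 ≤ (Real.sqrt (2 * Real.pi * w))⁻¹ := by positivity
  have h1 : heatKer u 0 - heatKer u z
      ≤ u ^ (-(1/2) : ℝ) * (1 - Real.exp (-z ^ 2 / (2 * u))) := by
    rw [heatKer_sub_eq]
    exact mul_le_mul_of_nonneg_right hA (by linarith)
  have h1' : 0 ≤ heatKer u 0 - heatKer u z := by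
    rw [heatKer_sub_eq]
    exact mul_nonneg hAnn (by linarith)
  have h2 : heatKer w 0 + heatKer w z ≤ 2 * w ^ (-(1/2) : ℝ) := by
    have e1 : heatKer w 0 + heatKer w z
        = (Real.sqrt (2 * Real.pi * w))⁻¹ * (1 + Real.exp (-z ^ 2 / (2 * w))) := by
      simp [heatKer]; ring
    rw [e1]
    calc (Real.sqrt (2 * Real.pi * w))⁻¹ * (1 + Real.exp (-z ^ 2 / (2 * w)))
        ≤ w ^ (-(1/2) : ℝ) * 2 := by
          apply mul_le_mul hA' (by linarith) (by linarith) (Real.rpow_nonneg hw.le _)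
      _ = 2 * w ^ (-(1/2) : ℝ) := by ring
  have h2' : 0 ≤ heatKer w 0 + heatKer w z := by
    have hk : ∀ x : ℝ, 0 ≤ heatKer w x := fun x =>
      mul_nonneg (inv_nonneg.2 (Real.sqrt_nonneg _)) (Real.exp_pos _).le
    exact add_nonneg (hk 0) (hk z)
  have hug : 0 ≤ u ^ γ := Real.rpow_nonneg hu.le _
  calc u ^ γ * (heatKer u 0 - heatKer u z) * (heatKer w 0 + heatKer w z)
      ≤ u ^ γ * (u ^ (-(1/2) : ℝ) * (1 - Real.exp (-z ^ 2 / (2 * u))))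
          * (2 * w ^ (-(1/2) : ℝ)) := by
        apply mul_le_mul
        · exact mul_le_mul_of_nonneg_left h1 hug
        · exact h2
        · exact h2'
        · exact mul_nonneg hug (mul_nonneg (Real.rpow_nonneg hu.le _) (by linarith))
    _ = 2 * w ^ (-(1/2) : ℝ) * ((u ^ γ * u ^ (-(1/2) : ℝ)) * (1 - Real.exp (-z ^ 2 / (2 * u)))) := by
        ring
    _ = 2 * w ^ (-(1/2) : ℝ) * phi γ z u := by
        rw [← Real.rpow_add hu γ (-(1/2)), show γ + -(1/2) = γ - 1/2 from by ring]
        rfl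

/-- Two-variable heat-kernel integral estimate. -/
theorem heat_kernel_double_integral_estimate (β γ : ℝ)
    (hβ : β ∈ Set.Icc (0:ℝ) (1/2)) (hγ : 0 ≤ γ) :
    ∃ c : ℝ, 0 < c ∧ ∀ a b : ℝ, a < b → ∀ z : ℝ,
      (∫ s in a..b, ∫ t in s..b,
          (t - s) ^ γ * (heatKer (t - s) 0 - heatKer (t - s) z) *
            (heatKer (s - a) 0 + heatKer (s - a) z))
        ≤ c * |b - a| ^ (γ + 1 - β) * |z| ^ (2 * β) := by
  obtain ⟨hβ0, hβ2⟩ := hβ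
  obtain ⟨C, hC, hA⟩ := lemA hβ0 hβ2 hγ
  refine ⟨4 * C, by linarith, ?_⟩
  intro a b hab z
  have hba : 0 < b - a := by linarith
  have he : 0 ≤ γ + 1/2 - β := by linarith
  have habs : |b - a| = b - a := abs_of_pos hba
  set c' : ℝ := 2 * C * (b - a) ^ (γ + 1/2 - β) * |z| ^ (2 * β) with hc'def
  have hc'0 : 0 ≤ c' :=
    mul_nonneg (mul_nonneg (by linarith) (Real.rpow_nonneg hba.le _))
      (Real.rpow_nonneg (abs_nonneg z) _)
  set G : ℝ → ℝ := fun s => c' * (s - a) ^ (-(1/2) : ℝ) with hGdef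
  set F : ℝ → ℝ := fun s => ∫ t in s..b,
      (t - s) ^ γ * (heatKer (t - s) 0 - heatKer (t - s) z) *
        (heatKer (s - a) 0 + heatKer (s - a) z) with hFdef
  have hFG : ∀ s ∈ Set.Icc a b, F s ≤ G s := by
    intro s hs
    have hG0 : 0 ≤ G s :=
      mul_nonneg hc'0 (Real.rpow_nonneg (by linarith [hs.1]) _)
    rcases eq_or_lt_of_le hs.1 with rfl | has
    · -- s = a
      have hz0 : ∀ t : ℝ, (t - a) ^ γ * (heatKer (t - a) 0 - heatKer (t - a) z) *
          (heatKer (a - a) 0 + heatKer (a - a) z) = 0 := by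
        intro t
        simp [heatKer]
      calc F a = 0 := by
            rw [hFdef]; simp only [hz0, intervalIntegral.integral_zero]
        _ ≤ G a := hG0
    · -- a < s
      have hw : 0 < s - a := by linarith
      have hsb : s ≤ b := hs.2
      by_cases hfi : IntervalIntegrable (fun t => (t - s) ^ γ *
          (heatKer (t - s) 0 - heatKer (t - s) z) *
          (heatKer (s - a) 0 + heatKer (s - a) z)) volume s b
      · have hphi_int : IntervalIntegrable (fun t => phi γ z (t - s)) volume s b := by
          have h := (phi_intervalIntegrable hγ z (b - s) (by linarith)).comp_sub_right s
          simpa using h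
        have hg_int : IntervalIntegrable
            (fun t => 2 * (s - a) ^ (-(1/2) : ℝ) * phi γ z (t - s)) volume s b :=
          hphi_int.const_mul _
        have hptw : ∀ t ∈ Set.Icc s b, (t - s) ^ γ *
            (heatKer (t - s) 0 - heatKer (t - s) z) *
            (heatKer (s - a) 0 + heatKer (s - a) z)
            ≤ 2 * (s - a) ^ (-(1/2) : ℝ) * phi γ z (t - s) := by
          intro t ht
          rcases eq_or_lt_of_le ht.1 with rfl | hst
          · simp [heatKer, phi_zero]
          · exact inner_ptwise hγ z has hst
        have hmono := intervalIntegral.integral_mono_on hsb hfi hg_int hptw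
        have hshift : (∫ t in s..b, phi γ z (t - s))
            = ∫ u in (0:ℝ)..(b - s), phi γ z u := by
          rw [intervalIntegral.integral_comp_sub_right (phi γ z) s, sub_self]
        have hinner : (∫ t in s..b, 2 * (s - a) ^ (-(1/2) : ℝ) * phi γ z (t - s))
            ≤ 2 * (s - a) ^ (-(1/2) : ℝ) * (C * (b - a) ^ (γ + 1/2 - β) * |z| ^ (2 * β)) := by
          rw [intervalIntegral.integral_const_mul]
          apply mul_le_mul_of_nonneg_left _ (by positivity)
          rw [hshift]
          calc (∫ u in (0:ℝ)..(b - s), phi γ z u)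
              ≤ C * (b - s) ^ (γ + 1/2 - β) * |z| ^ (2 * β) := hA (b - s) z (by linarith)
            _ ≤ C * (b - a) ^ (γ + 1/2 - β) * |z| ^ (2 * β) := by
                apply mul_le_mul_of_nonneg_right _ (Real.rpow_nonneg (abs_nonneg z) _)
                apply mul_le_mul_of_nonneg_left _ hC.le
                exact Real.rpow_le_rpow (by linarith) (by linarith) he
        calc F s ≤ ∫ t in s..b, 2 * (s - a) ^ (-(1/2) : ℝ) * phi γ z (t - s) := hmono
          _ ≤ 2 * (s - a) ^ (-(1/2) : ℝ) * (C * (b - a) ^ (γ + 1/2 - β) * |z| ^ (2 * β)) :=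
              hinner
          _ = G s := by rw [hGdef, hc'def]; ring
      · calc F s = 0 := intervalIntegral.integral_undef hfi
          _ ≤ G s := hG0
  by_cases hFint : IntervalIntegrable F volume a b
  · have hGint : IntervalIntegrable G volume a b := by
      have h : IntervalIntegrable (fun s : ℝ => (s - a) ^ (-(1/2) : ℝ)) volume a b := by
        have h2 := (intervalIntegral.intervalIntegrable_rpow'
          (by norm_num : (-1:ℝ) < -(1/2))).comp_sub_right (c := a) (a := 0) (b := b - a)
        simpa using h2
      exact h.const_mul c'
    have hint : (∫ s in a..b, G s) = c' * (2 * (b - a) ^ ((1/2) : ℝ)) := by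
      rw [hGdef]
      rw [intervalIntegral.integral_const_mul]
      rw [intervalIntegral.integral_comp_sub_right (fun u : ℝ => u ^ (-(1/2):ℝ)) a, sub_self]
      rw [integral_rpow (Or.inl (by norm_num))]
      rw [Real.zero_rpow (by norm_num : (-(1/2):ℝ) + 1 ≠ 0), sub_zero,
        show (-(1/2):ℝ) + 1 = 1/2 from by norm_num]
      ring
    calc (∫ s in a..b, F s) ≤ ∫ s in a..b, G s :=
          intervalIntegral.integral_mono_on hab.le hFint hGint hFG
      _ = c' * (2 * (b - a) ^ ((1/2) : ℝ)) := hint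
      _ = 4 * C * |b - a| ^ (γ + 1 - β) * |z| ^ (2 * β) := by
          rw [habs, hc'def, show γ + 1 - β = (γ + 1/2 - β) + 1/2 from by ring,
            Real.rpow_add hba]
          ring
  · calc (∫ s in a..b, F s) = 0 := intervalIntegral.integral_undef hFint
      _ ≤ 4 * C * |b - a| ^ (γ + 1 - β) * |z| ^ (2 * β) := by
        apply mul_nonneg (mul_nonneg (by linarith) (Real.rpow_nonneg (abs_nonneg _) _))
          (Real.rpow_nonneg (abs_nonneg z) _)
end
end
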